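/- For every τ = (μ)(ν) ∈ X_C^{*2} and every σ = (μ̃')(ν̃') ∈ X_C^1 with τ ≤ σ, one has Φ_C(τ) ≤ σ. Consequently, Φ_C(τ) is the smallest element of X_C^1 that is ≥ τ, i.e. Φ_C(τ) = min{σ ∈ X_C^1 : σ ≥ τ}. -/

import Mathlib

/-!
`Φ_C` only moves mass between `ν_j` and `μ_{j+1}`, keeping `ν_j + μ_{j+1}` fixed, so the
partial sums `∑_{i<j} (μ_i + ν_i) + μ_j` are unchanged and `τ ≤ Φ_C(τ)` holds. For the
other family, at `j + 1` the only change is that `ν_j` is replaced by `⌊(ν_j + μ_{j+1})/2⌋`.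
For `σ ∈ X_C^1` with `τ ≤ σ`, adding the second-family inequalities of `τ ≤ σ` at `j` and
`j + 1` and using `μ̃'_{j+1} ≤ ν̃'_j + 1` bounds twice this partial sum of `Φ_C(τ)` by twice
that of `σ` plus one, which suffices after rounding down.
-/

open Finset

/-- A partition: weakly decreasing, finitely supported sequence of naturals (0-indexed). -/
def IsPartition (μ : ℕ → ℕ) : Prop :=
  Antitone μ ∧ ∃ N, ∀ i, N ≤ i → μ i = 0

/-- Membership in `P_2(n)`: a pair of partitions of total size `n`. -/
def PairP2 (n : ℕ) (p : (ℕ → ℕ) × (ℕ → ℕ)) : Prop :=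
  IsPartition p.1 ∧ IsPartition p.2 ∧
    ∃ N, (∀ i, N ≤ i → p.1 i = 0 ∧ p.2 i = 0) ∧
      (∑ i ∈ range N, (p.1 i + p.2 i)) = n

/-- The dominance-type order on pairs of partitions (0-indexed: `p.1 0` is `μ_1`). -/
def PairLE (p q : (ℕ → ℕ) × (ℕ → ℕ)) : Prop :=
  (∀ j, ∑ i ∈ range j, (p.1 i + p.2 i) ≤ ∑ i ∈ range j, (q.1 i + q.2 i)) ∧
  (∀ j, (∑ i ∈ range j, (p.1 i + p.2 i)) + p.1 j ≤
        (∑ i ∈ range j, (q.1 i + q.2 i)) + q.1 j)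

/-- The map `Φ_C` on pairs of partitions (0-indexed). -/
def PhiC (p : (ℕ → ℕ) × (ℕ → ℕ)) : (ℕ → ℕ) × (ℕ → ℕ) :=
  (fun i => match i with
    | 0 => p.1 0
    | j + 1 =>
        if p.2 j + 1 < p.1 (j + 1) then (p.1 (j + 1) + p.2 j + 1) / 2
        else p.1 (j + 1),
   fun i =>
    if p.2 i + 1 < p.1 (i + 1) then (p.1 (i + 1) + p.2 i) / 2 else p.2 i)

def pairSum (p : (ℕ → ℕ) × (ℕ → ℕ)) (j : ℕ) : ℕ :=
  ∑ i ∈ range j, (p.1 i + p.2 i)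

lemma pairSum_succ (p : (ℕ → ℕ) × (ℕ → ℕ)) (j : ℕ) :
    pairSum p (j + 1) = pairSum p j + p.1 j + p.2 j := by
  rw [pairSum, sum_range_succ, ← add_assoc]
  rfl

lemma pairLE_iff (p q : (ℕ → ℕ) × (ℕ → ℕ)) :
    PairLE p q ↔ (∀ j, pairSum p j ≤ pairSum q j) ∧
      ∀ j, pairSum p j + p.1 j ≤ pairSum q j + q.1 j := Iff.rfl

section PhiC

variable (p : (ℕ → ℕ) × (ℕ → ℕ))

lemma phiC_fst_zero : (PhiC p).1 0 = p.1 0 := rfl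

lemma phiC_fst_succ (j : ℕ) :
    (PhiC p).1 (j + 1) =
      if p.2 j + 1 < p.1 (j + 1) then (p.1 (j + 1) + p.2 j + 1) / 2 else p.1 (j + 1) := rfl

lemma phiC_snd (j : ℕ) :
    (PhiC p).2 j = if p.2 j + 1 < p.1 (j + 1) then (p.1 (j + 1) + p.2 j) / 2 else p.2 j := rfl

lemma phiC_snd_add_fst_succ (j : ℕ) :
    (PhiC p).2 j + (PhiC p).1 (j + 1) = p.2 j + p.1 (j + 1) := by
  rw [phiC_snd, phiC_fst_succ]
  split_ifs <;> omega

lemma le_phiC_snd (j : ℕ) : p.2 j ≤ (PhiC p).2 j := by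
  rw [phiC_snd]
  split_ifs <;> omega

lemma phiC_fst_succ_le (j : ℕ) : (PhiC p).1 (j + 1) ≤ (PhiC p).2 j + 1 := by
  rw [phiC_fst_succ, phiC_snd]
  split_ifs <;> omega

lemma pairSum_phiC_add_fst (j : ℕ) :
    pairSum (PhiC p) j + (PhiC p).1 j = pairSum p j + p.1 j := by
  induction j with
  | zero => rfl
  | succ k ih =>
    have h := phiC_snd_add_fst_succ p k
    rw [pairSum_succ, pairSum_succ]
    omega

lemma pairSum_phiC_succ (j : ℕ) :
    pairSum (PhiC p) (j + 1) = pairSum p j + p.1 j + (PhiC p).2 j := by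
  rw [pairSum_succ, pairSum_phiC_add_fst]

lemma le_phiC : PairLE p (PhiC p) := by
  refine (pairLE_iff _ _).2 ⟨fun j => ?_, fun j => (pairSum_phiC_add_fst p j).ge⟩
  cases j with
  | zero => rfl
  | succ k =>
    rw [pairSum_phiC_succ, pairSum_succ]
    exact Nat.add_le_add_left (le_phiC_snd p k) _

end PhiC

lemma phiC_snd_le {p : (ℕ → ℕ) × (ℕ → ℕ)} (hμ : Antitone p.1) (hν : Antitone p.2)
    (hC : ∀ i, p.2 i ≤ p.1 i + 1) (j : ℕ) : (PhiC p).2 j ≤ (PhiC p).1 j + 1 := by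
  have hμ₁ : p.1 (j + 1) ≤ p.1 j := hμ j.le_succ
  have hC₀ := hC j
  cases j with
  | zero =>
    rw [phiC_snd, phiC_fst_zero]
    split_ifs <;> omega
  | succ k =>
    have hμ₂ : p.1 (k + 2) ≤ p.1 (k + 1) := hμ (k + 1).le_succ
    have hν₁ : p.2 (k + 1) ≤ p.2 k := hν k.le_succ
    rw [phiC_snd, phiC_fst_succ]
    split_ifs <;> omega

lemma phiC_le_of_le {p q : (ℕ → ℕ) × (ℕ → ℕ)} (hq : ∀ i, q.1 (i + 1) ≤ q.2 i + 1)
    (hle : PairLE p q) : PairLE (PhiC p) q := by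
  rw [pairLE_iff] at hle ⊢
  obtain ⟨hsum, hsum_fst⟩ := hle
  refine ⟨fun j => ?_, fun j => (pairSum_phiC_add_fst p j).trans_le (hsum_fst j)⟩
  cases j with
  | zero => rfl
  | succ k =>
    have hk := hsum_fst k
    have hk₁ := hsum_fst (k + 1)
    have hq₁ := hq k
    rw [pairSum_succ, pairSum_succ] at hk₁
    rw [pairSum_phiC_succ, pairSum_succ, phiC_snd]
    split_ifs
    · omega
    · have hsk := hsum (k + 1)
      rw [pairSum_succ, pairSum_succ] at hsk
      omega

/-- `Φ_C(τ)` is the smallest element of `X_C^1` that is `≥ τ`. -/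
theorem phiC_min (p : (ℕ → ℕ) × (ℕ → ℕ))
    (h1 : IsPartition p.1) (h2 : IsPartition p.2)
    (hC : ∀ i, p.2 i ≤ p.1 i + 1) :
    (∀ i, (PhiC p).1 (i + 1) ≤ (PhiC p).2 i + 1 ∧ (PhiC p).2 i ≤ (PhiC p).1 i + 1) ∧
    PairLE p (PhiC p) ∧
    (∀ q : (ℕ → ℕ) × (ℕ → ℕ), IsPartition q.1 → IsPartition q.2 →
      (∀ i, q.1 (i + 1) ≤ q.2 i + 1 ∧ q.2 i ≤ q.1 i + 1) →
      PairLE p q → PairLE (PhiC p) q) :=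
  ⟨fun i => ⟨phiC_fst_succ_le p i, phiC_snd_le h1.1 h2.1 hC i⟩, le_phiC p,
    fun _ _ _ hq hle => phiC_le_of_le (fun i => (hq i).1) hle⟩
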